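/- arXiv:2006.15309 — 4 statements merged into one kernel-verified Lean document; each statement's English description precedes it below -/
import Mathlib

section
/- Let 0 < K₁ < K₂ and define V̂(σ) = exp(-(r + σ²/2)·T)·√(K₁·K₂). Then for V > 0 and σ > 0: exp(-d1(V,K₁,σ)²/2) > exp(-d1(V,K₂,σ)²/2) if and only if V < V̂(σ); they are equal iff V = V̂(σ). (Equivalently, the sign of the vega of the bull spread Call(V,K₁) - Call(V,K₂) is positive below the threshold V̂ and negative above it.) -/
/-- the sign of the bull-spread vega is determined by the
threshold V̂(σ) = exp(-(r+σ²/2)T)·√(K₁K₂). -/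
theorem stmt_2 (r T σ V K₁ K₂ : ℝ) (hT : 0 < T) (hσ : 0 < σ) (hV : 0 < V)
    (hK₁ : 0 < K₁) (hK₂ : 0 < K₂) (hK : K₁ < K₂) :
    (Real.exp (-(((Real.log (V / K₁) + (r + σ ^ 2 / 2) * T) / (σ * Real.sqrt T)) ^ 2) / 2)
        > Real.exp (-(((Real.log (V / K₂) + (r + σ ^ 2 / 2) * T) / (σ * Real.sqrt T)) ^ 2) / 2)
      ↔ V < Real.exp (-(r + σ ^ 2 / 2) * T) * Real.sqrt (K₁ * K₂))
    ∧ (Real.exp (-(((Real.log (V / K₁) + (r + σ ^ 2 / 2) * T) / (σ * Real.sqrt T)) ^ 2) / 2)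
        = Real.exp (-(((Real.log (V / K₂) + (r + σ ^ 2 / 2) * T) / (σ * Real.sqrt T)) ^ 2) / 2)
      ↔ V = Real.exp (-(r + σ ^ 2 / 2) * T) * Real.sqrt (K₁ * K₂)) := by
  have hsT : 0 < Real.sqrt T := Real.sqrt_pos.mpr hT
  have hs : 0 < σ * Real.sqrt T := mul_pos hσ hsT
  set s := σ * Real.sqrt T with hsdef
  set m := (r + σ ^ 2 / 2) * T with hm
  set a := (Real.log (V / K₁) + m) / s with ha
  set b := (Real.log (V / K₂) + m) / s with hb
  set Vh := Real.exp (-(r + σ ^ 2 / 2) * T) * Real.sqrt (K₁ * K₂) with hVh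
  have hVhatpos : 0 < Vh := by positivity
  have hVhat : Real.log Vh = -m + (Real.log K₁ + Real.log K₂) / 2 := by
    rw [hVh, Real.log_mul (Real.exp_ne_zero _) (by positivity), Real.log_exp,
      Real.log_sqrt (by positivity), Real.log_mul hK₁.ne' hK₂.ne', hm]
    ring
  have hab : a - b = (Real.log K₂ - Real.log K₁) / s := by
    rw [ha, hb, Real.log_div hV.ne' hK₁.ne', Real.log_div hV.ne' hK₂.ne']
    ring
  have habpos : 0 < a - b := by
    rw [hab]; exact div_pos (sub_pos.mpr (Real.log_lt_log hK₁ hK)) hs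
  have hsum : a + b = (2 * (Real.log V - Real.log Vh)) / s := by
    rw [ha, hb, Real.log_div hV.ne' hK₁.ne', Real.log_div hV.ne' hK₂.ne', hVhat]
    ring
  have hlogiff : Real.log V < Real.log Vh ↔ V < Vh := Real.log_lt_log_iff hV hVhatpos
  have hlogeq : Real.log V = Real.log Vh ↔ V = Vh :=
    ⟨fun h => by
      have := congrArg Real.exp h
      rwa [Real.exp_log hV, Real.exp_log hVhatpos] at this,
     fun h => by rw [h]⟩
  constructor
  · rw [gt_iff_lt, Real.exp_lt_exp]
    constructor
    · intro h
      have h1 : a ^ 2 < b ^ 2 := by linarith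
      have h2 : a + b < 0 := by nlinarith
      rw [hsum] at h2
      have h3 : Real.log V - Real.log Vh < 0 := by
        by_contra hcon
        push_neg at hcon
        have : 0 ≤ 2 * (Real.log V - Real.log Vh) / s := by positivity
        linarith
      exact hlogiff.mp (by linarith)
    · intro h
      have h3 : Real.log V - Real.log Vh < 0 := by
        have := hlogiff.mpr h; linarith
      have h2 : a + b < 0 := by
        rw [hsum]
        exact div_neg_of_neg_of_pos (by linarith) hs
      nlinarith
  · rw [Real.exp_eq_exp]
    constructor
    · intro h
      have h1 : a ^ 2 = b ^ 2 := by linarith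
      have hprod : (a - b) * (a + b) = 0 := by linear_combination h1
      have h2 : a + b = 0 := by
        rcases mul_eq_zero.mp hprod with h' | h'
        · exact absurd h' (ne_of_gt habpos)
        · exact h'
      rw [hsum] at h2
      have h3 : Real.log V - Real.log Vh = 0 := by
        field_simp at h2
        linarith
      exact hlogeq.mp (by linarith)
    · intro h
      have h3 : Real.log V = Real.log Vh := hlogeq.mpr h
      have h2 : a + b = 0 := by rw [hsum, h3]; simp
      have : a ^ 2 = b ^ 2 := by nlinarith
      linarith
end

section
/- Let g(σ) = d1(V,K₁,σ)² - d1(V,K₂,σ)², where d1(V,K,σ) = (ln(V/K) + (r + σ²/2)T)/(σ√T), with 0 < K₁ < K₂, V, T > 0. If ln(K₁·K₂/V²) - 2rT > 0, then g(σ) = 0 has a unique positive solution σ_max = √( (1/T)·ln(K₁·K₂/V²) - 2r ); moreover g(σ) < 0 for 0 < σ < σ_max and g(σ) > 0 for σ > σ_max. -/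
/-- g(σ) = d1(V,K₁,σ)² - d1(V,K₂,σ)² has a unique positive zero
σ_max, is negative below it and positive above it. -/
theorem stmt_3 (V K₁ K₂ r T : ℝ) (hV : 0 < V) (hK₁ : 0 < K₁) (hK₂ : 0 < K₂)
    (hT : 0 < T) (hK : K₁ < K₂)
    (hpos : (1 / T) * Real.log (K₁ * K₂ / V ^ 2) - 2 * r > 0)
    (g : ℝ → ℝ)
    (hg : ∀ σ : ℝ, g σ =
      ((Real.log (V / K₁) + (r + σ ^ 2 / 2) * T) / (σ * Real.sqrt T)) ^ 2
        - ((Real.log (V / K₂) + (r + σ ^ 2 / 2) * T) / (σ * Real.sqrt T)) ^ 2) :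
    (0 < Real.sqrt ((1 / T) * Real.log (K₁ * K₂ / V ^ 2) - 2 * r)
      ∧ g (Real.sqrt ((1 / T) * Real.log (K₁ * K₂ / V ^ 2) - 2 * r)) = 0)
    ∧ (∀ σ : ℝ, 0 < σ →
        (g σ = 0 ↔ σ = Real.sqrt ((1 / T) * Real.log (K₁ * K₂ / V ^ 2) - 2 * r)))
    ∧ (∀ σ : ℝ, 0 < σ →
        σ < Real.sqrt ((1 / T) * Real.log (K₁ * K₂ / V ^ 2) - 2 * r) → g σ < 0)
    ∧ (∀ σ : ℝ,
        σ > Real.sqrt ((1 / T) * Real.log (K₁ * K₂ / V ^ 2) - 2 * r) → g σ > 0) := by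
  set m : ℝ := (1 / T) * Real.log (K₁ * K₂ / V ^ 2) - 2 * r with hm
  set s : ℝ := Real.sqrt m with hs
  have hspos : 0 < s := Real.sqrt_pos.mpr hpos
  have hs2 : s ^ 2 = m := Real.sq_sqrt hpos.le
  have hL : 0 < Real.log (K₂ / K₁) :=
    Real.log_pos ((one_lt_div hK₁).mpr hK)
  have hl1 : Real.log (V / K₁) = Real.log V - Real.log K₁ := Real.log_div hV.ne' hK₁.ne'
  have hl2 : Real.log (V / K₂) = Real.log V - Real.log K₂ := Real.log_div hV.ne' hK₂.ne'
  have hl3 : Real.log (K₂ / K₁) = Real.log K₂ - Real.log K₁ := Real.log_div hK₂.ne' hK₁.ne'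
  have hlm : Real.log (K₁ * K₂ / V ^ 2) = Real.log K₁ + Real.log K₂ - 2 * Real.log V := by
    rw [Real.log_div (by positivity) (by positivity), Real.log_mul hK₁.ne' hK₂.ne',
      Real.log_pow]
    push_cast; ring
  have key : ∀ σ : ℝ, σ ≠ 0 → g σ = Real.log (K₂ / K₁) * (σ ^ 2 - m) / σ ^ 2 := by
    intro σ hσ
    have hT' : Real.sqrt T ^ 2 = T := Real.sq_sqrt hT.le
    rw [hg σ, div_pow, div_pow, mul_pow, hT', div_sub_div_same, hm, hl1, hl2, hl3, hlm]
    field_simp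
    ring
  refine ⟨⟨hspos, ?_⟩, ?_, ?_, ?_⟩
  · rw [key s hspos.ne', hs2]; simp
  · intro σ hσ
    rw [key σ hσ.ne']
    constructor
    · intro h
      have h2 : σ ^ 2 - m = 0 := by
        rcases mul_eq_zero.mp ((div_eq_zero_iff.mp h).resolve_right (by positivity)) with h' | h'
        · exact absurd h' hL.ne'
        · exact h'
      have hsq : σ ^ 2 = s ^ 2 := by rw [hs2]; linarith
      have h1 : Real.sqrt (σ ^ 2) = Real.sqrt (s ^ 2) := by rw [hsq]
      rwa [Real.sqrt_sq hσ.le, Real.sqrt_sq hspos.le] at h1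
    · intro h
      rw [h, hs2]; simp
  · intro σ hσ hlt
    rw [key σ hσ.ne']
    have : σ ^ 2 < m := by rw [← hs2]; exact pow_lt_pow_left₀ hlt hσ.le (by norm_num)
    apply div_neg_of_neg_of_pos
    · exact mul_neg_of_pos_of_neg hL (by linarith)
    · positivity
  · intro σ hgt
    have hσ : 0 < σ := hspos.trans hgt
    rw [key σ hσ.ne']
    have : m < σ ^ 2 := by rw [← hs2]; exact pow_lt_pow_left₀ hgt hspos.le (by norm_num)
    apply div_pos
    · exact mul_pos hL (by linarith)
    · positivity
end

section
/- Define f(σ) = exp(-d1(V,K₁,σ)²/2) - exp(-d1(V,K₂,σ)²/2) for σ > 0, with 0 < K₁ < K₂, V, T > 0, r real. If V < V* := exp(-rT)·√(K₁·K₂), then f(σ) > 0 for 0 < σ < σ_max and f(σ) < 0 for σ > σ_max, where σ_max = √((1/T)·ln(K₁K₂/V²) - 2r). (Thus the vega of the junior-debt bull spread changes sign exactly once, from positive to negative, at σ_max.) -/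
/-!
Writing `d₁(K) = (log (V / K) + (r + σ² / 2) T) / (σ √T)`, the sign of `f(σ)` is the sign of
`d₁(K₂)² - d₁(K₁)²`. The two numerators differ by `log (K₂ / K₁) > 0` and add up to
`T (σ² - σ_max²)`, so the difference of squares factors as
`log (K₂ / K₁) (σ_max² - σ²) / σ²`.
-/

open Real

noncomputable def blackScholesD1 (V K r T σ : ℝ) : ℝ :=
  (log (V / K) + (r + σ ^ 2 / 2) * T) / (σ * √T)

/-- `σ_max²`; when it is negative, `σ_max = √(criticalVariance …)` is `0`. -/
noncomputable def criticalVariance (V K₁ K₂ r T : ℝ) : ℝ :=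
  (1 / T) * log (K₁ * K₂ / V ^ 2) - 2 * r

noncomputable def vegaGap (V K₁ K₂ r T σ : ℝ) : ℝ :=
  exp (-blackScholesD1 V K₁ r T σ ^ 2 / 2) - exp (-blackScholesD1 V K₂ r T σ ^ 2 / 2)

lemma exp_neg_sq_div_two_lt_iff {x y : ℝ} :
    exp (-y ^ 2 / 2) < exp (-x ^ 2 / 2) ↔ x ^ 2 < y ^ 2 := by
  rw [exp_lt_exp, div_lt_div_iff_of_pos_right two_pos, neg_lt_neg_iff]

lemma blackScholesD1_sq_sub_blackScholesD1_sq {V K₁ K₂ r T : ℝ} (σ : ℝ) (hV : V ≠ 0)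
    (hK₁ : K₁ ≠ 0) (hK₂ : K₂ ≠ 0) (hT : 0 < T) :
    blackScholesD1 V K₂ r T σ ^ 2 - blackScholesD1 V K₁ r T σ ^ 2 =
      log (K₂ / K₁) * (criticalVariance V K₁ K₂ r T - σ ^ 2) / σ ^ 2 := by
  rcases eq_or_ne σ 0 with rfl | hσ
  · simp [blackScholesD1]
  simp only [blackScholesD1, criticalVariance, div_pow, mul_pow, sq_sqrt hT.le]
  rw [log_div hV hK₁, log_div hV hK₂, log_div hK₂ hK₁,
    log_div (mul_ne_zero hK₁ hK₂) (pow_ne_zero 2 hV), log_mul hK₁ hK₂, log_pow]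
  field_simp
  ring

section

variable {V K₁ K₂ r T σ : ℝ}

lemma vegaGap_pos_iff (hV : V ≠ 0) (hK₁ : 0 < K₁) (hK : K₁ < K₂) (hT : 0 < T)
    (hσ : σ ≠ 0) :
    0 < vegaGap V K₁ K₂ r T σ ↔ σ ^ 2 < criticalVariance V K₁ K₂ r T := by
  have hlog : 0 < log (K₂ / K₁) := log_pos ((one_lt_div hK₁).2 hK)
  rw [vegaGap, sub_pos, exp_neg_sq_div_two_lt_iff, ← sub_pos,
    blackScholesD1_sq_sub_blackScholesD1_sq σ hV hK₁.ne' (hK₁.trans hK).ne' hT,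
    div_pos_iff_of_pos_right (by positivity), mul_pos_iff_of_pos_left hlog, sub_pos]

lemma vegaGap_neg_iff (hV : V ≠ 0) (hK₁ : 0 < K₁) (hK : K₁ < K₂) (hT : 0 < T)
    (hσ : σ ≠ 0) :
    vegaGap V K₁ K₂ r T σ < 0 ↔ criticalVariance V K₁ K₂ r T < σ ^ 2 := by
  have hlog : 0 < log (K₂ / K₁) := log_pos ((one_lt_div hK₁).2 hK)
  rw [vegaGap, sub_neg, exp_neg_sq_div_two_lt_iff, ← sub_neg,
    blackScholesD1_sq_sub_blackScholesD1_sq σ hV hK₁.ne' (hK₁.trans hK).ne' hT,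
    div_lt_iff₀ (by positivity), zero_mul, ← smul_eq_mul, smul_neg_iff_of_pos_left hlog,
    sub_neg]

end

theorem stmt_4_general (V K₁ K₂ r T : ℝ) (hV : 0 < V) (hK₁ : 0 < K₁)
    (hT : 0 < T) (hK : K₁ < K₂)
    (f : ℝ → ℝ)
    (hf : ∀ σ : ℝ, f σ =
      Real.exp (-(((Real.log (V / K₁) + (r + σ ^ 2 / 2) * T) / (σ * Real.sqrt T)) ^ 2) / 2)
        - Real.exp (-(((Real.log (V / K₂) + (r + σ ^ 2 / 2) * T) / (σ * Real.sqrt T)) ^ 2) / 2)) :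
    (∀ σ : ℝ, 0 < σ →
        σ < Real.sqrt ((1 / T) * Real.log (K₁ * K₂ / V ^ 2) - 2 * r) → f σ > 0)
    ∧ (∀ σ : ℝ,
        σ > Real.sqrt ((1 / T) * Real.log (K₁ * K₂ / V ^ 2) - 2 * r) → f σ < 0) := by
  obtain rfl : f = vegaGap V K₁ K₂ r T := funext hf
  refine ⟨fun σ hσ hlt => ?_, fun σ hgt => ?_⟩
  · exact (vegaGap_pos_iff hV.ne' hK₁ hK hT hσ.ne').2 ((lt_sqrt hσ.le).1 hlt)
  · have hσ : 0 < σ := (sqrt_nonneg _).trans_lt hgt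
    exact (vegaGap_neg_iff hV.ne' hK₁ hK hT hσ.ne').2 ((sqrt_lt' hσ).1 hgt)

/-- the vega f(σ) of the junior-debt bull spread changes sign
exactly once, from positive to negative, at σ_max, when V < V*. -/
theorem stmt_4 (V K₁ K₂ r T : ℝ) (hV : 0 < V) (hK₁ : 0 < K₁) (hK₂ : 0 < K₂)
    (hT : 0 < T) (hK : K₁ < K₂)
    (hVstar : V < Real.exp (-r * T) * Real.sqrt (K₁ * K₂))
    (f : ℝ → ℝ)
    (hf : ∀ σ : ℝ, f σ =
      Real.exp (-(((Real.log (V / K₁) + (r + σ ^ 2 / 2) * T) / (σ * Real.sqrt T)) ^ 2) / 2)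
        - Real.exp (-(((Real.log (V / K₂) + (r + σ ^ 2 / 2) * T) / (σ * Real.sqrt T)) ^ 2) / 2)) :
    (∀ σ : ℝ, 0 < σ →
        σ < Real.sqrt ((1 / T) * Real.log (K₁ * K₂ / V ^ 2) - 2 * r) → f σ > 0)
    ∧ (∀ σ : ℝ,
        σ > Real.sqrt ((1 / T) * Real.log (K₁ * K₂ / V ^ 2) - 2 * r) → f σ < 0) :=
  stmt_4_general V K₁ K₂ r T hV hK₁ hT hK f hf
end

section
/- If V ≥ V* := exp(-rT)·√(K₁·K₂) (with 0 < K₁ < K₂, V, T > 0), then for every σ > 0 we have exp(-d1(V,K₁,σ)²/2) ≤ exp(-d1(V,K₂,σ)²/2), with strict inequality when V > V*. Hence the vega of the bull spread Call(V,K₁,σ) - Call(V,K₂,σ) is nonpositive for all σ > 0, i.e., there is no interior risk-maximizing σ. -/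
/-- if V ≥ V* then the bull-spread vega is nonpositive for all
σ > 0 (strictly negative when V > V*): no interior risk-maximizing σ. -/
theorem stmt_5 (V K₁ K₂ r T : ℝ) (hV : 0 < V) (hK₁ : 0 < K₁) (hK₂ : 0 < K₂)
    (hT : 0 < T) (hK : K₁ < K₂)
    (hVstar : V ≥ Real.exp (-r * T) * Real.sqrt (K₁ * K₂)) :
    ∀ σ : ℝ, 0 < σ →
      (Real.exp (-(((Real.log (V / K₁) + (r + σ ^ 2 / 2) * T) / (σ * Real.sqrt T)) ^ 2) / 2)
          ≤ Real.exp (-(((Real.log (V / K₂) + (r + σ ^ 2 / 2) * T) / (σ * Real.sqrt T)) ^ 2) / 2))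
      ∧ (V > Real.exp (-r * T) * Real.sqrt (K₁ * K₂) →
          Real.exp (-(((Real.log (V / K₁) + (r + σ ^ 2 / 2) * T) / (σ * Real.sqrt T)) ^ 2) / 2)
            < Real.exp (-(((Real.log (V / K₂) + (r + σ ^ 2 / 2) * T) / (σ * Real.sqrt T)) ^ 2) / 2)) := by
  intro σ hσ
  have hsT : 0 < Real.sqrt T := Real.sqrt_pos.mpr hT
  have hs : 0 < σ * Real.sqrt T := mul_pos hσ hsT
  set a : ℝ := Real.log (V / K₁) + (r + σ ^ 2 / 2) * T with ha
  set b : ℝ := Real.log (V / K₂) + (r + σ ^ 2 / 2) * T with hb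
  -- log V bound
  have hlogV : Real.log V ≥ -r * T + (Real.log K₁ + Real.log K₂) / 2 := by
    have h1 : 0 < Real.exp (-r * T) * Real.sqrt (K₁ * K₂) :=
      mul_pos (Real.exp_pos _) (Real.sqrt_pos.mpr (mul_pos hK₁ hK₂))
    have h2 := Real.log_le_log h1 hVstar
    rw [Real.log_mul (ne_of_gt (Real.exp_pos _)) (ne_of_gt (Real.sqrt_pos.mpr (mul_pos hK₁ hK₂))),
      Real.log_exp, Real.log_sqrt (le_of_lt (mul_pos hK₁ hK₂)),
      Real.log_mul (ne_of_gt hK₁) (ne_of_gt hK₂)] at h2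
    linarith
  have hσ2T : 0 < σ ^ 2 * T := mul_pos (pow_pos hσ 2) hT
  have hab1 : a - b = Real.log K₂ - Real.log K₁ := by
    rw [ha, hb, Real.log_div (ne_of_gt hV) (ne_of_gt hK₁),
      Real.log_div (ne_of_gt hV) (ne_of_gt hK₂)]; ring
  have hlt : Real.log K₁ < Real.log K₂ := Real.log_lt_log hK₁ hK
  have habsum : 0 < a + b := by
    have : a + b = 2 * Real.log V - Real.log K₁ - Real.log K₂ + 2 * (r * T) + σ ^ 2 * T := by
      rw [ha, hb, Real.log_div (ne_of_gt hV) (ne_of_gt hK₁),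
        Real.log_div (ne_of_gt hV) (ne_of_gt hK₂)]; ring
    nlinarith
  have hb2a2 : b ^ 2 < a ^ 2 := by nlinarith
  have hsq : (b / (σ * Real.sqrt T)) ^ 2 < (a / (σ * Real.sqrt T)) ^ 2 := by
    rw [div_pow, div_pow]
    gcongr
  have hlt' : Real.exp (-(a / (σ * Real.sqrt T)) ^ 2 / 2)
      < Real.exp (-(b / (σ * Real.sqrt T)) ^ 2 / 2) := by
    apply Real.exp_lt_exp.mpr; linarith
  exact ⟨le_of_lt hlt', fun _ => hlt'⟩
end
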